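/- Let ℓ be a prime and n a positive integer. The wreath product G = (ℤ/ℓℤ) ≀ (ℤ/nℤ) has a unique normal subgroup H with G/H ≅ ℤ/ℓℤ, namely H = H̃ ⋊ ℤ/nℤ where H̃ = {h ∈ (ℤ/ℓℤ)^n : h₁ + ⋯ + hₙ = 0}. -/
import Mathlib


open Finset

/-- The automorphism of `(ℤ/ℓℤ)^n` (written multiplicatively) given by cyclically
shifting the coordinates by `k`. -/
def shiftMulAut (ℓ n : ℕ) (k : ZMod n) : MulAut (Multiplicative (ZMod n → ZMod ℓ)) where
  toFun v := Multiplicative.ofAdd fun i => Multiplicative.toAdd v (i + k)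
  invFun v := Multiplicative.ofAdd fun i => Multiplicative.toAdd v (i - k)
  left_inv v := congrArg Multiplicative.ofAdd
    (funext fun i => congrArg (Multiplicative.toAdd v) (by abel))
  right_inv v := congrArg Multiplicative.ofAdd
    (funext fun i => congrArg (Multiplicative.toAdd v) (by abel))
  map_mul' v w := rfl

/-- The action of `ℤ/nℤ` on `(ℤ/ℓℤ)^n` by cyclic shifts, as a monoid homomorphism. -/
def shiftHom (ℓ n : ℕ) :
    Multiplicative (ZMod n) →* MulAut (Multiplicative (ZMod n → ZMod ℓ)) where
  toFun k := shiftMulAut ℓ n (Multiplicative.toAdd k)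
  map_one' := by
    refine MulEquiv.ext fun v => ?_
    show Multiplicative.ofAdd
        (fun i => Multiplicative.toAdd v (i + Multiplicative.toAdd (1 : Multiplicative (ZMod n))))
        = v
    refine congrArg Multiplicative.ofAdd (funext fun i => congrArg (Multiplicative.toAdd v) ?_)
    simp
  map_mul' a b := by
    refine MulEquiv.ext fun v => ?_
    show Multiplicative.ofAdd
        (fun i => Multiplicative.toAdd v (i + (Multiplicative.toAdd a + Multiplicative.toAdd b)))
        = Multiplicative.ofAdd
          (fun i => Multiplicative.toAdd v (i + Multiplicative.toAdd a + Multiplicative.toAdd b))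
    exact congrArg Multiplicative.ofAdd
      (funext fun i => congrArg (Multiplicative.toAdd v) (add_assoc ..).symm)

/-- The wreath product `(ℤ/ℓℤ) ≀ (ℤ/nℤ)`, i.e. the semidirect product
`(ℤ/ℓℤ)^n ⋊ ℤ/nℤ` with `ℤ/nℤ` acting by cyclic shift of coordinates. -/
abbrev WreathG (ℓ n : ℕ) :=
  SemidirectProduct (Multiplicative (ZMod n → ZMod ℓ)) (Multiplicative (ZMod n)) (shiftHom ℓ n)

/-- The homomorphism `(h, σ) ↦ h₁ + ⋯ + hₙ` from the wreath product to `ℤ/ℓℤ`. -/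
def sumHom (ℓ n : ℕ) [NeZero n] : WreathG ℓ n →* Multiplicative (ZMod ℓ) where
  toFun g := Multiplicative.ofAdd (∑ i, Multiplicative.toAdd g.left i)
  map_one' := by simp
  map_mul' g h := by
    show Multiplicative.ofAdd (∑ i, Multiplicative.toAdd (g * h).left i)
        = Multiplicative.ofAdd (∑ i, Multiplicative.toAdd g.left i)
          * Multiplicative.ofAdd (∑ i, Multiplicative.toAdd h.left i)
    rw [← ofAdd_add]
    congr 1
    have key : ∀ i : ZMod n, Multiplicative.toAdd (g * h).left i
        = Multiplicative.toAdd g.left i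
          + Multiplicative.toAdd h.left (i + Multiplicative.toAdd g.right) := fun i => rfl
    rw [Finset.sum_congr rfl fun i _ => key i, Finset.sum_add_distrib]
    congr 1
    exact Fintype.sum_equiv (Equiv.addRight (Multiplicative.toAdd g.right)) _ _ fun i => rfl

/-- The wreath product `(ℤ/ℓℤ) ≀ (ℤ/nℤ)` has a unique normal subgroup `H` with
`G/H ≅ ℤ/ℓℤ`, namely `H = H̃ ⋊ ℤ/nℤ` where `H̃ = {h : h₁ + ⋯ + hₙ = 0}`; this
subgroup is exactly the kernel of the coordinate-sum homomorphism `sumHom`. -/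
theorem unique_cyclic_quotient_wreath (ℓ n : ℕ) [NeZero n] (hℓ : ℓ.Prime)
    (hcop : Nat.Coprime ℓ n) (H : Subgroup (WreathG ℓ n)) [H.Normal] :
    Nonempty ((WreathG ℓ n ⧸ H) ≃* Multiplicative (ZMod ℓ)) ↔ H = (sumHom ℓ n).ker := by
  haveI : Fact ℓ.Prime := ⟨hℓ⟩
  constructor
  · rintro ⟨φ⟩
    set ψ : WreathG ℓ n →* Multiplicative (ZMod ℓ) :=
      φ.toMonoidHom.comp (QuotientGroup.mk' H) with hψdef
    have hker : ψ.ker = H := by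
      ext g
      simp only [hψdef, MonoidHom.mem_ker, MonoidHom.comp_apply, MulEquiv.coe_toMonoidHom,
        EmbeddingLike.map_eq_one_iff, QuotientGroup.mk'_apply, QuotientGroup.eq_one_iff]
    have hsurj : Function.Surjective ψ := φ.surjective.comp (QuotientGroup.mk'_surjective H)
    -- ψ kills the ℤ/n part
    have hinr : ∀ k : Multiplicative (ZMod n), ψ (SemidirectProduct.inr k) = 1 := by
      intro k
      have h1 : (ψ (SemidirectProduct.inr k)) ^ n = 1 := by
        rw [← map_pow, ← map_pow]
        have hk : k ^ n = 1 := by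
          rw [← ofAdd_toAdd k, ← ofAdd_nsmul, nsmul_eq_mul, ZMod.natCast_self, zero_mul,
            ofAdd_zero]
        rw [hk, map_one, map_one]
      have h2 : (ψ (SemidirectProduct.inr k)) ^ ℓ = 1 := by
        set x := ψ (SemidirectProduct.inr k)
        rw [← ofAdd_toAdd x, ← ofAdd_nsmul, nsmul_eq_mul, ZMod.natCast_self, zero_mul,
          ofAdd_zero]
      have hd : orderOf (ψ (SemidirectProduct.inr k)) ∣ Nat.gcd ℓ n :=
        Nat.dvd_gcd (orderOf_dvd_of_pow_eq_one h2) (orderOf_dvd_of_pow_eq_one h1)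
      rw [hcop, Nat.dvd_one] at hd
      exact orderOf_eq_one_iff.mp hd
    -- the induced additive map on (ℤ/ℓ)^n
    set F : (ZMod n → ZMod ℓ) →+ ZMod ℓ :=
      MonoidHom.toAdditive (ψ.comp (SemidirectProduct.inl)) with hFdef
    have hFval : ∀ a : ZMod n → ZMod ℓ,
        F a = Multiplicative.toAdd (ψ (SemidirectProduct.inl (Multiplicative.ofAdd a))) :=
      fun a => rfl
    -- shift invariance
    have hshift : ∀ (k : ZMod n) (a : ZMod n → ZMod ℓ), F (fun i => a (i + k)) = F a := by
      intro k a
      rw [hFval, hFval]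
      congr 1
      have key : (SemidirectProduct.inl (Multiplicative.ofAdd fun i => a (i + k)) :
          WreathG ℓ n)
          = SemidirectProduct.inr (Multiplicative.ofAdd k)
            * SemidirectProduct.inl (Multiplicative.ofAdd a)
            * (SemidirectProduct.inr (Multiplicative.ofAdd k))⁻¹ := by
        rw [← map_inv, ← SemidirectProduct.inl_aut]
        rfl
      rw [key, map_mul, map_mul, map_inv, mul_comm, inv_mul_cancel_left]
    set u : ZMod ℓ := F (Pi.single 0 1) with hu
    have hsingle0 : ∀ c : ZMod ℓ, F (Pi.single (0 : ZMod n) c) = c * u := by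
      intro c
      have hc : Pi.single (0 : ZMod n) c = (c.val • Pi.single (0 : ZMod n) (1 : ZMod ℓ) : ZMod n → ZMod ℓ) := by
        funext j
        by_cases hj : j = 0
        · subst hj
          simp [ZMod.natCast_val, ZMod.cast_id]
        · simp [Pi.single_apply, hj]
      rw [hc, map_nsmul, nsmul_eq_mul, ZMod.natCast_val, ZMod.cast_id, ← hu]
    have hsingle : ∀ (i : ZMod n) (c : ZMod ℓ), F (Pi.single i c) = c * u := by
      intro i c
      rw [← hsingle0 c, ← hshift i (Pi.single i c)]
      congr 1
      funext j
      by_cases hj : j = 0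
      · subst hj; simp [Pi.single_apply]
      · have : j + i ≠ i := fun h => hj (by simpa using (add_eq_right.mp h))
        simp [Pi.single_apply, hj, this]
    have hF : ∀ a : ZMod n → ZMod ℓ, F a = (∑ i, a i) * u := by
      intro a
      conv_lhs => rw [← Finset.univ_sum_single a]
      rw [map_sum, Finset.sum_congr rfl fun i _ => hsingle i (a i), ← Finset.sum_mul]
    have hψg : ∀ g : WreathG ℓ n,
        ψ g = Multiplicative.ofAdd ((∑ i, Multiplicative.toAdd g.left i) * u) := by
      intro g
      conv_lhs => rw [← SemidirectProduct.inl_left_mul_inr_right g]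
      rw [map_mul, hinr, mul_one]
      have : ψ (SemidirectProduct.inl g.left)
          = Multiplicative.ofAdd (F (Multiplicative.toAdd g.left)) := rfl
      rw [this, hF]
    -- u ≠ 0
    have hune : u ≠ 0 := by
      intro h0
      obtain ⟨g, hg⟩ := hsurj (Multiplicative.ofAdd (1 : ZMod ℓ))
      rw [hψg, h0, mul_zero] at hg
      exact one_ne_zero (Multiplicative.ofAdd.injective hg).symm
    rw [← hker]
    ext g
    simp only [MonoidHom.mem_ker, hψg]
    constructor
    · intro h
      have := Multiplicative.ofAdd.injective (h.trans (ofAdd_zero).symm)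
      have hsum : (∑ i, Multiplicative.toAdd g.left i) = 0 :=
        (mul_eq_zero.mp this).resolve_right hune
      show Multiplicative.ofAdd (∑ i, Multiplicative.toAdd g.left i) = 1
      rw [hsum, ofAdd_zero]
    · intro h
      have hsum : (∑ i, Multiplicative.toAdd g.left i) = 0 :=
        Multiplicative.ofAdd.injective ((show Multiplicative.ofAdd
          (∑ i, Multiplicative.toAdd g.left i) = 1 from h).trans (ofAdd_zero).symm)
      rw [hsum, zero_mul, ofAdd_zero]
  · rintro rfl
    have hsurj : Function.Surjective (sumHom ℓ n) := by
      intro c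
      classical
      refine ⟨SemidirectProduct.inl
        (Multiplicative.ofAdd (Pi.single (0 : ZMod n) (Multiplicative.toAdd c))), ?_⟩
      show Multiplicative.ofAdd
          (∑ i, Pi.single (0 : ZMod n) (Multiplicative.toAdd c) i) = c
      rw [Fintype.sum_pi_single']
      simp
    exact ⟨QuotientGroup.quotientKerEquivOfSurjective _ hsurj⟩
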